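/- Let n ≥ 1 and let F : ℝ^{4n} → ℝ be smooth and everywhere positive, and set u = F² and f = −2 ln F. Then for every x ∈ ℝ^{4n}: u(x)·P_f(x)(∇f(x)) = 4·P_F(x)(∇F(x)) + 8·F(x)^{−2}·|∇F(x)|⁴ − 8·F(x)^{−1}·D²F(x)[∇F(x), ∇F(x)] − 4·F(x)^{−1}·|∇F(x)|²·ΔF(x). -/

import Mathlib

/-!
The twisted traces in the flat P-form vanish: `D³g(x)(W, ·, ·)` is a symmetric bilinear form
and each `I_s` is skew-adjoint, so its trace against `I_s` is zero. Hence
`P_g(x)(Z) = Σ_b D³g(x)[Z, e_b, e_b] = D(Δg)(x)(Z)`, and the identity comes from differentiating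
`Δ(log F) = F⁻¹ ΔF - F⁻² |∇F|²` in the direction `∇f = -2 F⁻¹ ∇F`.
-/

open scoped RealInnerProductSpace

noncomputable section

/-- `ℝ^{4n}` identified with `ℍⁿ`: the `4n` real coordinates are indexed by pairs
`(a, t)` where `a` numbers the quaternionic component and `t ∈ {0,1,2,3}` the
real coordinates `1, i, j, k` of that quaternion. -/
abbrev Qn (n : ℕ) := EuclideanSpace ℝ (Fin n × Fin 4)

/-- The three almost complex structures `I₁, I₂, I₃` on `ℝ^{4n} = ℍⁿ`, given by
componentwise left multiplication by the quaternion units `i, j, k`. -/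
def Iop (n : ℕ) (s : Fin 3) (x : Qn n) : Qn n := WithLp.toLp 2 fun (p : Fin n × Fin 4) =>
  ![ ![ -x (p.1, 1),  x (p.1, 0), -x (p.1, 3),  x (p.1, 2) ],
     ![ -x (p.1, 2),  x (p.1, 3),  x (p.1, 0), -x (p.1, 1) ],
     ![ -x (p.1, 3), -x (p.1, 2),  x (p.1, 1),  x (p.1, 0) ] ] s p.2

/-- The standard orthonormal basis of `ℝ^{4n}`. -/
def eQ (n : ℕ) (p : Fin n × Fin 4) : Qn n := EuclideanSpace.single p 1

/-- Second Fréchet derivative as a bilinear form. -/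
def D2Q (n : ℕ) (g : Qn n → ℝ) (x X Y : Qn n) : ℝ := iteratedFDeriv ℝ 2 g x ![X, Y]

/-- Third Fréchet derivative as a trilinear form. -/
def D3Q (n : ℕ) (g : Qn n → ℝ) (x Z X Y : Qn n) : ℝ := iteratedFDeriv ℝ 3 g x ![Z, X, Y]

/-- The Laplacian `Δg(x) = Σ_a D²g(x)[e_a, e_a]`. -/
def lapQ (n : ℕ) (g : Qn n → ℝ) (x : Qn n) : ℝ := ∑ p, D2Q n g x (eQ n p) (eQ n p)

/-- The flat quaternionic P-form
`P_g(x)(Z) = Σ_b D³g(x)[Z,e_b,e_b] + Σ_{s=1}^3 Σ_b D³g(x)[I_s Z, e_b, I_s e_b]`. -/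
def PQ (n : ℕ) (g : Qn n → ℝ) (x Z : Qn n) : ℝ :=
  (∑ b, D3Q n g x Z (eQ n b) (eQ n b)) +
    ∑ s : Fin 3, ∑ b, D3Q n g x (Iop n s Z) (eQ n b) (Iop n s (eQ n b))

open InnerProductSpace
open scoped ContDiff

section OrthonormalBasis

variable {ι E : Type*} [Fintype ι] [NormedAddCommGroup E] [InnerProductSpace ℝ E]
  (b : OrthonormalBasis ι ℝ E)

theorem OrthonormalBasis.sum_apply_mul_inner (L : E →L[ℝ] ℝ) (g : E) :
    ∑ i, L (b i) * ⟪g, b i⟫ = L g := by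
  conv_rhs => rw [← b.sum_repr' g]
  simp [real_inner_comm, mul_comm]

theorem OrthonormalBasis.sum_apply_apply_eq_zero_of_skew (φ : E →L[ℝ] E →L[ℝ] ℝ)
    (hφ : ∀ v w, φ v w = φ w v) {T : E → E} (hT : ∀ v w, ⟪T v, w⟫ = -⟪v, T w⟫) :
    ∑ i, φ (b i) (T (b i)) = 0 := by
  have expand : ∀ i, φ (b i) (T (b i)) = ∑ j, ⟪b j, T (b i)⟫ * φ (b i) (b j) := by
    intro i
    conv_lhs => rw [← b.sum_repr' (T (b i))]
    simp
  have antisymm : ∑ i, ∑ j, ⟪b j, T (b i)⟫ * φ (b i) (b j)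
      = -∑ i, ∑ j, ⟪b j, T (b i)⟫ * φ (b i) (b j) := by
    conv_lhs => rw [Finset.sum_comm]
    rw [← Finset.sum_neg_distrib]
    refine Finset.sum_congr rfl fun i _ => ?_
    rw [← Finset.sum_neg_distrib]
    refine Finset.sum_congr rfl fun j _ => ?_
    rw [hφ (b j) (b i), real_inner_comm (T (b j)) (b i), hT]
    ring
  simp only [expand]
  linarith

end OrthonormalBasis

theorem eQ_eq_basisFun (n : ℕ) (p : Fin n × Fin 4) :
    eQ n p = EuclideanSpace.basisFun (Fin n × Fin 4) ℝ p :=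
  (EuclideanSpace.basisFun_apply _ _ _).symm

theorem inner_Iop_left (n : ℕ) (s : Fin 3) (v w : Qn n) :
    ⟪Iop n s v, w⟫ = -⟪v, Iop n s w⟫ := by
  simp only [PiLp.inner_apply, Iop, RCLike.inner_apply, conj_trivial,
    Fintype.sum_prod_type, Fin.sum_univ_four, ← Finset.sum_neg_distrib]
  refine Finset.sum_congr rfl fun a _ => ?_
  fin_cases s <;> simp <;> ring

section Calculus

variable {E F G H : Type*} [NormedAddCommGroup E] [NormedSpace ℝ E]
  [NormedAddCommGroup F] [NormedSpace ℝ F] [NormedAddCommGroup G] [NormedSpace ℝ G]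
  [NormedAddCommGroup H] [NormedSpace ℝ H]

theorem fderiv_apply_const {c : E → F →L[ℝ] G} {x : E} (hc : DifferentiableAt ℝ c x)
    (u : F) (v : E) : fderiv ℝ (fun y => c y u) x v = fderiv ℝ c x v u := by
  simp [fderiv_clm_apply hc (differentiableAt_const u)]

theorem fderiv_apply_apply_const {c : E → F →L[ℝ] G →L[ℝ] H} {x : E}
    (hc : DifferentiableAt ℝ c x) (u : F) (w : G) (v : E) :
    fderiv ℝ (fun y => c y u w) x v = fderiv ℝ c x v u w := by
  rw [fderiv_apply_const (hc.clm_apply (differentiableAt_const u)), fderiv_apply_const hc]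

theorem fderiv_fderiv_fderiv_swap {g : E → F} (hg : ContDiff ℝ ∞ g) (x W X Y : E) :
    fderiv ℝ (fderiv ℝ (fderiv ℝ g)) x W X Y = fderiv ℝ (fderiv ℝ (fderiv ℝ g)) x W Y X := by
  have hg'' : Differentiable ℝ (fderiv ℝ (fderiv ℝ g)) :=
    ((hg.fderiv_right (m := ∞) le_rfl).fderiv_right (m := ∞) le_rfl).differentiable (by simp)
  have hsymm : ∀ y, fderiv ℝ (fderiv ℝ g) y X Y = fderiv ℝ (fderiv ℝ g) y Y X := fun y =>
    hg.contDiffAt.isSymmSndFDerivAt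
      (by rw [minSmoothness_of_isRCLikeNormedField]; exact WithTop.coe_le_coe.2 le_top) X Y
  rw [← fderiv_apply_apply_const (hg'' x), ← fderiv_apply_apply_const (hg'' x)]
  simp only [hsymm]

end Calculus

section PForm

variable {n : ℕ} {g : Qn n → ℝ}

theorem D2Q_eq_fderiv (x X Y : Qn n) : D2Q n g x X Y = fderiv ℝ (fderiv ℝ g) x X Y := by
  simp [D2Q, iteratedFDeriv_two_apply]

theorem D3Q_eq_fderiv (x Z X Y : Qn n) :
    D3Q n g x Z X Y = fderiv ℝ (fderiv ℝ (fderiv ℝ g)) x Z X Y := by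
  rw [D3Q, iteratedFDeriv_succ_apply_right, iteratedFDeriv_two_apply]
  rfl

theorem lapQ_eq_sum_fderiv :
    lapQ n g = fun y => ∑ p, fderiv ℝ (fderiv ℝ g) y (eQ n p) (eQ n p) := by
  ext y
  simp only [lapQ, D2Q_eq_fderiv]

theorem ContDiff.lapQ (hg : ContDiff ℝ ∞ g) : ContDiff ℝ ∞ (lapQ n g) := by
  rw [lapQ_eq_sum_fderiv]
  exact ContDiff.sum fun p _ =>
    ((hg.fderiv_right (m := ∞) le_rfl).fderiv_right (m := ∞) le_rfl).clm_apply contDiff_const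
      |>.clm_apply contDiff_const

theorem PQ_eq_fderiv_lapQ (hg : ContDiff ℝ ∞ g) (x Z : Qn n) :
    PQ n g x Z = fderiv ℝ (lapQ n g) x Z := by
  have hg''' : Differentiable ℝ (fderiv ℝ (fderiv ℝ g)) :=
    ((hg.fderiv_right (m := ∞) le_rfl).fderiv_right (m := ∞) le_rfl).differentiable (by simp)
  have twisted : ∀ s, ∑ b, D3Q n g x (Iop n s Z) (eQ n b) (Iop n s (eQ n b)) = 0 := fun s => by
    simp only [D3Q_eq_fderiv, eQ_eq_basisFun]
    exact OrthonormalBasis.sum_apply_apply_eq_zero_of_skew _ _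
      (fderiv_fderiv_fderiv_swap hg x _) (inner_Iop_left n s)
  rw [PQ, Finset.sum_eq_zero fun s _ => twisted s, add_zero, lapQ_eq_sum_fderiv,
    fderiv_fun_sum fun p _ => (hg''' _).clm_apply (differentiableAt_const _) |>.clm_apply
      (differentiableAt_const _)]
  simp only [_root_.sum_apply, D3Q_eq_fderiv, fderiv_apply_apply_const (hg''' x)]

theorem PQ_const_mul (c : ℝ) (hg : ContDiff ℝ 3 g) (x Z : Qn n) :
    PQ n (fun y => c * g y) x Z = c * PQ n g x Z := by
  have hD3 : ∀ W X Y, D3Q n (fun y => c * g y) x W X Y = c * D3Q n g x W X Y := fun W X Y => by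
    simp only [D3Q, ← smul_eq_mul (a := c)]
    rw [show (fun y => c • g y) = c • g from rfl, iteratedFDeriv_const_smul_apply hg.contDiffAt]
    rfl
  simp only [PQ, hD3, Finset.mul_sum, mul_add]

end PForm

section Log

variable {E : Type*} [NormedAddCommGroup E] [NormedSpace ℝ E] {F : E → ℝ}

theorem fderiv_fderiv_log_apply (hF : ContDiff ℝ ∞ F) (h0 : ∀ y, F y ≠ 0) (x X Y : E) :
    fderiv ℝ (fderiv ℝ fun y => Real.log (F y)) x X Y =
      (F x)⁻¹ * fderiv ℝ (fderiv ℝ F) x X Y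
        - (F x)⁻¹ ^ 2 * (fderiv ℝ F x X * fderiv ℝ F x Y) := by
  have hF' : Differentiable ℝ F := hF.differentiable (by simp)
  have hF'' : Differentiable ℝ (fderiv ℝ F) :=
    (hF.fderiv_right (m := ∞) le_rfl).differentiable (by simp)
  have hlog : fderiv ℝ (fun y => Real.log (F y)) = fun y => (F y)⁻¹ • fderiv ℝ F y :=
    funext fun y => fderiv.log (hF' y) (h0 y)
  have hinv : HasFDerivAt (fun y => (F y)⁻¹) (-(F x ^ 2)⁻¹ • fderiv ℝ F x) x :=
    (hasDerivAt_inv (h0 x)).comp_hasFDerivAt x (hF' x).hasFDerivAt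
  rw [hlog, (hinv.fun_smul (hF'' x).hasFDerivAt).fderiv]
  simp only [neg_smul, add_apply, smul_apply, ContinuousLinearMap.smulRight_apply, neg_apply,
    smul_eq_mul, inv_pow]
  ring

end Log

section Gradient

variable {ι E : Type*} [Fintype ι] [NormedAddCommGroup E] [InnerProductSpace ℝ E]
  [CompleteSpace E] {F : E → ℝ}

theorem fderiv_apply_eq_inner_gradient (x v : E) : fderiv ℝ F x v = ⟪gradient F x, v⟫ := by
  rw [← toDual_gradient, toDual_apply_apply]

theorem fderiv_apply_gradient (x : E) : fderiv ℝ F x (gradient F x) = ‖gradient F x‖ ^ 2 := by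
  rw [fderiv_apply_eq_inner_gradient, real_inner_self_eq_norm_sq]

theorem OrthonormalBasis.sum_fderiv_apply_sq (b : OrthonormalBasis ι ℝ E) (x : E) :
    ∑ i, fderiv ℝ F x (b i) ^ 2 = ‖gradient F x‖ ^ 2 := by
  rw [← fderiv_apply_gradient, ← b.sum_apply_mul_inner]
  simp only [← fderiv_apply_eq_inner_gradient, sq]

theorem OrthonormalBasis.fderiv_sum_fderiv_apply_sq (b : OrthonormalBasis ι ℝ E)
    (hF : ContDiff ℝ ∞ F) (x Z : E) :
    fderiv ℝ (fun y => ∑ i, fderiv ℝ F y (b i) ^ 2) x Z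
      = 2 * fderiv ℝ (fderiv ℝ F) x Z (gradient F x) := by
  have hF'' : Differentiable ℝ (fderiv ℝ F) :=
    (hF.fderiv_right (m := ∞) le_rfl).differentiable (by simp)
  have hpartial : ∀ i, DifferentiableAt ℝ (fun y => fderiv ℝ F y (b i)) x := fun i =>
    (hF'' x).clm_apply (differentiableAt_const _)
  rw [fderiv_fun_sum fun i _ => (hpartial i).fun_pow 2, sum_apply,
    ← b.sum_apply_mul_inner (fderiv ℝ (fderiv ℝ F) x Z), Finset.mul_sum]
  refine Finset.sum_congr rfl fun i _ => ?_
  rw [fderiv_fun_pow 2 (hpartial i), ← fderiv_apply_eq_inner_gradient]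
  simp only [Nat.add_one_sub_one, pow_one, nsmul_eq_mul, Nat.cast_ofNat, smul_apply,
    fderiv_apply_const (hF'' x), smul_eq_mul]
  ring

theorem gradient_const_mul_log (c : ℝ) {x : E} (hF : DifferentiableAt ℝ F x) (h0 : F x ≠ 0) :
    gradient (fun y => c * Real.log (F y)) x = (c * (F x)⁻¹) • gradient F x := by
  simp only [gradient, fderiv_const_mul (hF.log h0), fderiv.log hF h0, smul_smul, map_smulₛₗ]
  simp

end Gradient

section LogLaplacian

variable {n : ℕ} {F : Qn n → ℝ}

theorem lapQ_log (hF : ContDiff ℝ ∞ F) (h0 : ∀ y, F y ≠ 0) :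
    lapQ n (fun y => Real.log (F y))
      = fun y => (F y)⁻¹ * lapQ n F y - (F y)⁻¹ ^ 2 * ∑ p, fderiv ℝ F y (eQ n p) ^ 2 := by
  simp only [lapQ_eq_sum_fderiv, fderiv_fderiv_log_apply hF h0, Finset.sum_sub_distrib,
    Finset.mul_sum, sq]

theorem fderiv_lapQ_log_apply (hF : ContDiff ℝ ∞ F) (h0 : ∀ y, F y ≠ 0) (x Z : Qn n) :
    fderiv ℝ (lapQ n fun y => Real.log (F y)) x Z =
      (F x)⁻¹ * PQ n F x Z - (F x)⁻¹ ^ 2 * fderiv ℝ F x Z * lapQ n F x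
        - 2 * (F x)⁻¹ ^ 2 * D2Q n F x Z (gradient F x)
        + 2 * (F x)⁻¹ ^ 3 * fderiv ℝ F x Z * ‖gradient F x‖ ^ 2 := by
  have hinv : HasFDerivAt (fun y => (F y)⁻¹) (-(F x ^ 2)⁻¹ • fderiv ℝ F x) x :=
    (hasDerivAt_inv (h0 x)).comp_hasFDerivAt x (hF.differentiable (by simp) x).hasFDerivAt
  have hlap : HasFDerivAt (lapQ n F) (fderiv ℝ (lapQ n F) x) x :=
    (hF.lapQ.differentiable (by simp) x).hasFDerivAt
  have hsq : HasFDerivAt (fun y => ∑ p, fderiv ℝ F y (eQ n p) ^ 2)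
      (fderiv ℝ (fun y => ∑ p, fderiv ℝ F y (eQ n p) ^ 2) x) x := by
    have hC : ContDiff ℝ ∞ fun y => ∑ p, fderiv ℝ F y (eQ n p) ^ 2 :=
      ContDiff.sum fun p _ => ((hF.fderiv_right (m := ∞) le_rfl).clm_apply contDiff_const).pow 2
    exact (hC.differentiable (by simp) x).hasFDerivAt
  have hsq_eq : ∑ p, fderiv ℝ F x (eQ n p) ^ 2 = ‖gradient F x‖ ^ 2 := by
    simpa only [eQ_eq_basisFun] using (EuclideanSpace.basisFun _ ℝ).sum_fderiv_apply_sq x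
  have hsq_deriv : fderiv ℝ (fun y => ∑ p, fderiv ℝ F y (eQ n p) ^ 2) x Z
      = 2 * D2Q n F x Z (gradient F x) := by
    simpa only [eQ_eq_basisFun, D2Q_eq_fderiv] using
      (EuclideanSpace.basisFun _ ℝ).fderiv_sum_fderiv_apply_sq hF x Z
  rw [lapQ_log hF h0, ((hinv.fun_mul hlap).fun_sub ((hinv.pow 2).fun_mul hsq)).fderiv]
  simp only [sub_apply, add_apply, smul_apply, smul_eq_mul, hsq_eq, hsq_deriv,
    ← PQ_eq_fderiv_lapQ hF]
  ring

end LogLaplacian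

theorem qc_P_change_of_variable_F_general (n : ℕ) (F : Qn n → ℝ)
    (hF : ContDiff ℝ (⊤ : ℕ∞) F) (hFpos : ∀ x, 0 < F x)
    (u f : Qn n → ℝ) (hu : u = fun x => (F x) ^ 2)
    (hf : f = fun x => -2 * Real.log (F x)) (x : Qn n) :
    u x * PQ n f x (gradient f x) =
      4 * PQ n F x (gradient F x)
      + 8 * (F x) ^ (-2 : ℤ) * ‖gradient F x‖ ^ 4
      - 8 * (F x) ^ (-1 : ℤ) * D2Q n F x (gradient F x) (gradient F x)
      - 4 * (F x) ^ (-1 : ℤ) * ‖gradient F x‖ ^ 2 * lapQ n F x := by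
  subst hu hf
  have hF0 : ∀ y, F y ≠ 0 := fun y => (hFpos y).ne'
  have hlogF : ContDiff ℝ ∞ fun y => Real.log (F y) := hF.log hF0
  rw [PQ_const_mul _ (hlogF.of_le (WithTop.coe_le_coe.2 le_top)), PQ_eq_fderiv_lapQ hlogF,
    gradient_const_mul_log _ (hF.differentiable (by simp) x) (hF0 x), map_smul, smul_eq_mul,
    fderiv_lapQ_log_apply hF hF0, fderiv_apply_gradient]
  field_simp [hF0 x]
  ring

/-- change-of-variable formula for the P-function,
`u·P_f(∇f) = 4 P_F(∇F) + 8 F⁻²|∇F|⁴ − 8 F⁻¹ ∇²F(∇F,∇F) − 4 F⁻¹ |∇F|² ΔF`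
where `u = F²`, `f = −2 ln F`. -/
theorem qc_P_change_of_variable_F (n : ℕ) (hn : 1 ≤ n) (F : Qn n → ℝ)
    (hF : ContDiff ℝ (⊤ : ℕ∞) F) (hFpos : ∀ x, 0 < F x)
    (u f : Qn n → ℝ) (hu : u = fun x => (F x) ^ 2)
    (hf : f = fun x => -2 * Real.log (F x)) (x : Qn n) :
    u x * PQ n f x (gradient f x) =
      4 * PQ n F x (gradient F x)
      + 8 * (F x) ^ (-2 : ℤ) * ‖gradient F x‖ ^ 4
      - 8 * (F x) ^ (-1 : ℤ) * D2Q n F x (gradient F x) (gradient F x)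
      - 4 * (F x) ^ (-1 : ℤ) * ‖gradient F x‖ ^ 2 * lapQ n F x :=
  qc_P_change_of_variable_F_general n F hF hFpos u f hu hf x
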